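/- Let m_k(μ_sc)=∫x^k dμ_sc denote the moments of the semicircle law, so m_{2k}(μ_sc) is the k-th Catalan number and odd moments vanish. Then for all integers i,j≥1, m_{i+j}(μ_sc) − m_i(μ_sc)·m_j(μ_sc) = Σ_{l≥1} D_{i,l}·D_{j,l}, i.e. the covariance matrix of the centered monomials (x^i−m_i(μ_sc))_{i≥1} under μ_sc equals D·Dᵀ. -/

import Mathlib

open MeasureTheory ProbabilityTheory Filter Topology Polynomial
open scoped ENNReal NNReal

noncomputable section

/-- The semicircle law on `[-2,2]`, with Lebesgue density `√(4-x²)/(2π)`. -/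
def semicircle : Measure ℝ :=
  volume.withDensity (fun x => ENNReal.ofReal
    (if x ∈ Set.Icc (-2 : ℝ) 2 then Real.sqrt (4 - x ^ 2) / (2 * Real.pi) else 0))

/-- The `k`-th moment of the semicircle law. -/
def mSc (k : ℕ) : ℝ := ∫ x, x ^ k ∂semicircle

/-- Binomial coefficient with integer lower index, with the convention `C(n,k) = 0` for `k < 0`. -/
def intChoose (n : ℕ) (k : ℤ) : ℕ := if k < 0 then 0 else n.choose k.toNat

/-- The infinite matrix `D` with entries
`D_{i,j} = C(i,(i-j)/2) - C(i,(i-j)/2 - 1)` for `j ≤ i`, `i+j` even, and `0` otherwise. -/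
def Dmat (i j : ℕ) : ℝ :=
  if j ≤ i ∧ Even (i + j) then
    (intChoose i (((i : ℤ) - j) / 2) : ℝ) - (intChoose i (((i : ℤ) - j) / 2 - 1) : ℝ)
  else 0

open Finset Real intervalIntegral

/-! The semicircle law has `m_n = D_{n,0}`: under `x = 2 cos θ` its moments become Wallis
integrals, giving the Catalan numbers `C(2k,k) - C(2k,k-1)` and zero in odd degree. The entry
`D_{n,l}` counts the paths of `n` steps `±1` from height `0` to height `l` staying nonnegative
(the reflection principle gives the binomial difference), so `D_{n+1,l} = D_{n,l-1} + D_{n,l+1}`.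
Splitting a path of length `i + j` returning to `0` at time `i` gives
`∑_l D_{i,l} D_{j,l} = D_{i+j,0}`, and the `l = 0` term is `m_i m_j`. -/

lemma intChoose_natCast (n k : ℕ) : intChoose n k = n.choose k := by
  simp [intChoose]

lemma intChoose_of_neg (n : ℕ) {k : ℤ} (hk : k < 0) : intChoose n k = 0 := by
  simp [intChoose, hk]

lemma intChoose_succ (n : ℕ) (k : ℤ) :
    intChoose (n + 1) k = intChoose n k + intChoose n (k - 1) := by
  rcases lt_trichotomy k 0 with hk | rfl | hk
  · simp [intChoose_of_neg _ hk, intChoose_of_neg _ (by omega : k - 1 < 0)]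
  · simp [intChoose]
  · obtain ⟨s, rfl⟩ : ∃ s : ℕ, k = s + 1 := ⟨(k - 1).toNat, by omega⟩
    rw [show (s : ℤ) + 1 - 1 = s by ring, ← Nat.cast_succ, intChoose_natCast, intChoose_natCast,
      intChoose_natCast, Nat.choose_succ_succ', add_comm]

def ballot (n : ℕ) (t : ℤ) : ℝ := intChoose n t - intChoose n (t - 1)

lemma ballot_succ (n : ℕ) (t : ℤ) : ballot (n + 1) t = ballot n t + ballot n (t - 1) := by
  simp only [ballot, intChoose_succ, Nat.cast_add]
  ring

lemma ballot_neg_one (n : ℕ) : ballot n (-1) = 0 := by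
  simp [ballot, intChoose]

lemma ballot_two_mul_add_one_succ (s : ℕ) : ballot (2 * s + 1) (s + 1) = 0 := by
  rw [ballot, add_sub_cancel_right, show (s : ℤ) + 1 = ((s + 1 : ℕ) : ℤ) by push_cast; ring,
    intChoose_natCast, intChoose_natCast, Nat.choose_symm_half, sub_self]

lemma ballot_two_mul (k : ℕ) : ballot (2 * k) k = catalan k := by
  rcases k with _ | m
  · simp [ballot, intChoose, catalan_zero]
  have hcat : ((m + 2 : ℕ) : ℝ) * catalan (m + 1) = (2 * (m + 1)).choose (m + 1) := by
    exact_mod_cast succ_mul_catalan_eq_centralBinom (m + 1)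
  have hsucc :
      ((2 * (m + 1)).choose (m + 1) : ℝ) * (m + 1) = (2 * (m + 1)).choose m * (m + 2) := by
    have := Nat.choose_succ_right_eq (2 * (m + 1)) m
    rw [show 2 * (m + 1) - m = m + 2 by omega] at this
    exact_mod_cast this
  rw [ballot, show ((m + 1 : ℕ) : ℤ) - 1 = m by push_cast; ring, intChoose_natCast,
    intChoose_natCast]
  push_cast at hcat ⊢
  nlinarith

lemma Dmat_add_two_mul (l t : ℕ) : Dmat (l + 2 * t) l = ballot (l + 2 * t) t := by
  rw [Dmat, if_pos ⟨by omega, ⟨l + t, by ring⟩⟩,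
    show (((l + 2 * t : ℕ) : ℤ) - l) / 2 = t by omega]
  rfl

lemma Dmat_eq_zero {n l : ℕ} (h : ∀ t, n ≠ l + 2 * t) : Dmat n l = 0 := by
  rw [Dmat, if_neg]
  rintro ⟨hle, m, hm⟩
  exact h (m - l) (by omega)

lemma Dmat_of_lt {n l : ℕ} (h : n < l) : Dmat n l = 0 :=
  Dmat_eq_zero fun _ => by omega

lemma Dmat_zero_left (l : ℕ) : Dmat 0 l = if l = 0 then 1 else 0 := by
  rcases l with _ | l
  · simpa [ballot, intChoose] using Dmat_add_two_mul 0 0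
  · exact Dmat_of_lt l.succ_pos

lemma Dmat_succ_succ (n l : ℕ) : Dmat (n + 1) (l + 1) = Dmat n l + Dmat n (l + 2) := by
  by_cases h : ∃ t, n = l + 2 * t
  · obtain ⟨t, rfl⟩ := h
    rw [show l + 2 * t + 1 = l + 1 + 2 * t by ring, Dmat_add_two_mul, Dmat_add_two_mul,
      show l + 1 + 2 * t = l + 2 * t + 1 by ring, ballot_succ]
    rcases t with _ | s
    · simp [Dmat_of_lt, ballot_neg_one]
    · rw [show l + 2 * (s + 1) = l + 2 + 2 * s by ring, Dmat_add_two_mul]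
      push_cast
      ring_nf
  · push Not at h
    rw [Dmat_eq_zero h, Dmat_eq_zero fun t => by have := h t; omega,
      Dmat_eq_zero fun t => by have := h (t + 1); omega, add_zero]

lemma Dmat_succ_zero (n : ℕ) : Dmat (n + 1) 0 = Dmat n 1 := by
  rcases Nat.even_or_odd' n with ⟨s, rfl | rfl⟩
  · rw [Dmat_eq_zero fun t => by omega, Dmat_eq_zero fun t => by omega]
  · have h0 := Dmat_add_two_mul 0 (s + 1)
    have h1 := Dmat_add_two_mul 1 s
    rw [show 0 + 2 * (s + 1) = 2 * s + 1 + 1 by ring, ballot_succ] at h0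
    rw [add_comm 1] at h1
    rw [h0, h1, show ((s + 1 : ℕ) : ℤ) - 1 = s by push_cast; ring]
    push_cast
    rw [ballot_two_mul_add_one_succ, zero_add]

lemma sum_range_Dmat_succ_mul {n N : ℕ} (hN : n + 1 ≤ N) (f : ℕ → ℝ) :
    ∑ l ∈ range (N + 1), Dmat (n + 1) l * f l
      = ∑ l ∈ range N, (Dmat n l * f (l + 1) + Dmat n (l + 1) * f l) := by
  obtain ⟨M, rfl⟩ : ∃ M, N = M + 1 := ⟨N - 1, by omega⟩
  have hdown : ∑ l ∈ range (M + 1), Dmat n (l + 1) * f l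
      = ∑ l ∈ range M, Dmat n (l + 2) * f (l + 1) + Dmat n 1 * f 0 :=
    sum_range_succ' _ _
  have htop : Dmat n (M + 2) = 0 := Dmat_of_lt (by omega)
  simp only [sum_range_succ' _ (M + 1), Dmat_succ_succ, Dmat_succ_zero, add_mul, sum_add_distrib,
    hdown, sum_range_succ (fun l => Dmat n (l + 2) * f (l + 1)) M, htop]
  ring

lemma sum_range_Dmat_mul_Dmat (i j : ℕ) {N : ℕ} (hN : i + j + 1 ≤ N) :
    ∑ l ∈ range N, Dmat i l * Dmat j l = Dmat (i + j) 0 := by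
  induction i generalizing j with
  | zero =>
    obtain ⟨M, rfl⟩ : ∃ M, N = M + 1 := ⟨N - 1, by omega⟩
    simp [Dmat_zero_left]
  | succ i ih =>
    obtain ⟨M, rfl⟩ : ∃ M, N = M + 1 := ⟨N - 1, by omega⟩
    -- both sides expand to the same sum, symmetric in `i` and `j`
    have hswap : ∑ l ∈ range (M + 1), Dmat i l * Dmat (j + 1) l
        = ∑ l ∈ range (M + 1), Dmat (i + 1) l * Dmat j l := by
      simp only [mul_comm (Dmat i _), sum_range_Dmat_succ_mul (show j + 1 ≤ M by omega),
        sum_range_Dmat_succ_mul (show i + 1 ≤ M by omega)]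
      exact sum_congr rfl fun l _ => by ring
    rw [← hswap, ih (j + 1) (by omega)]
    congr 1
    omega

lemma tsum_Dmat_succ_mul_Dmat_succ (i j : ℕ) :
    ∑' l, Dmat i (l + 1) * Dmat j (l + 1) = Dmat (i + j) 0 - Dmat i 0 * Dmat j 0 := by
  have hsum := sum_range_Dmat_mul_Dmat i j (N := i + j + 2) (by omega)
  rw [sum_range_succ'] at hsum
  rw [tsum_eq_sum (s := range (i + j + 1))
    fun l hl => by rw [Dmat_of_lt (by rw [mem_range] at hl; omega), zero_mul]]
  linarith

lemma integral_semicircle (g : ℝ → ℝ) :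
    ∫ x, g x ∂semicircle = ∫ x in (-2)..2, √(4 - x ^ 2) / (2 * π) * g x := by
  have hdens : Measurable fun x : ℝ =>
      if x ∈ Set.Icc (-2 : ℝ) 2 then √(4 - x ^ 2) / (2 * π) else 0 :=
    Measurable.ite measurableSet_Icc (by fun_prop) measurable_const
  rw [semicircle, integral_withDensity_eq_integral_toReal_smul hdens.ennreal_ofReal
    (ae_of_all _ fun _ => ENNReal.ofReal_lt_top),
    intervalIntegral.integral_of_le (by norm_num), ← integral_Icc_eq_integral_Ioc,
    ← MeasureTheory.integral_indicator measurableSet_Icc]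
  congr 1 with x
  by_cases hx : x ∈ Set.Icc (-2 : ℝ) 2 <;>
    simp [hx, Set.indicator, div_nonneg, pi_pos.le]

lemma integral_sqrt_four_sub_sq_mul {g : ℝ → ℝ} (hg : Continuous g) :
    ∫ x in (-2)..2, √(4 - x ^ 2) * g x = ∫ θ in 0..π, 4 * sin θ ^ 2 * g (2 * cos θ) := by
  have hsubst := integral_comp_mul_deriv (a := 0) (b := π) (f := fun θ => 2 * cos θ)
    (f' := fun θ => -(2 * sin θ)) (g := fun x => √(4 - x ^ 2) * g x)
    (fun θ _ => by simpa using (hasDerivAt_cos θ).const_mul 2) (by fun_prop) (by fun_prop)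
  simp only [Function.comp_def, cos_zero, cos_pi] at hsubst
  rw [mul_neg_one, mul_one] at hsubst
  rw [integral_symm, ← hsubst, ← intervalIntegral.integral_neg]
  refine integral_congr fun θ hθ => ?_
  rw [Set.uIcc_of_le pi_pos.le] at hθ
  have hsin : 0 ≤ sin θ := sin_nonneg_of_nonneg_of_le_pi hθ.1 hθ.2
  have hsqrt : √(4 - (2 * cos θ) ^ 2) = 2 * sin θ := by
    rw [← sqrt_sq (by positivity : 0 ≤ 2 * sin θ)]
    congr 1
    nlinarith [sin_sq_add_cos_sq θ]
  simp only [hsqrt]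
  ring

lemma integral_cos_pow_add_two (n : ℕ) :
    ∫ θ in 0..π, cos θ ^ (n + 2) = (n + 1) / (n + 2) * ∫ θ in 0..π, cos θ ^ n := by
  rw [integral_cos_pow, sin_zero, sin_pi, mul_zero, mul_zero, sub_self, zero_div, zero_add]

lemma integral_sin_sq_mul_cos_pow (n : ℕ) :
    ∫ θ in 0..π, sin θ ^ 2 * cos θ ^ n = (∫ θ in 0..π, cos θ ^ n) / (n + 2) := by
  have hsplit : ∫ θ in 0..π, sin θ ^ 2 * cos θ ^ n
      = (∫ θ in 0..π, cos θ ^ n) - ∫ θ in 0..π, cos θ ^ (n + 2) := by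
    rw [← intervalIntegral.integral_sub (by apply Continuous.intervalIntegrable; fun_prop)
      (by apply Continuous.intervalIntegrable; fun_prop)]
    congr 1 with θ
    rw [sin_sq]
    ring
  rw [hsplit, integral_cos_pow_add_two]
  field_simp
  ring

lemma integral_cos_pow_two_mul (k : ℕ) :
    ∫ θ in 0..π, cos θ ^ (2 * k) = π * k.centralBinom / 4 ^ k := by
  induction k with
  | zero => simp
  | succ k ih =>
    have hcb : ((k + 1 : ℕ) : ℝ) * (k + 1).centralBinom = 2 * (2 * k + 1) * k.centralBinom := by
      exact_mod_cast Nat.succ_mul_centralBinom_succ k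
    rw [mul_add_one, integral_cos_pow_add_two, ih]
    push_cast
    field_simp
    push_cast at hcb
    linear_combination (-2 * 4 ^ k) * hcb

lemma integral_cos_pow_two_mul_add_one (k : ℕ) : ∫ θ in 0..π, cos θ ^ (2 * k + 1) = 0 := by
  have hrefl := integral_comp_sub_left (fun θ => cos θ ^ (2 * k + 1)) π (a := 0) (b := π)
  simp only [cos_pi_sub, Odd.neg_pow (odd_two_mul_add_one k), intervalIntegral.integral_neg,
    sub_self, sub_zero] at hrefl
  linarith

lemma mSc_eq_integral_cos_pow (k : ℕ) :
    mSc k = 2 ^ (k + 1) / (π * (k + 2)) * ∫ θ in 0..π, cos θ ^ k := by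
  rw [mSc, integral_semicircle]
  simp only [div_mul_eq_mul_div, intervalIntegral.integral_div]
  rw [integral_sqrt_four_sub_sq_mul (continuous_pow k)]
  have hconst : ∀ θ, 4 * sin θ ^ 2 * (2 * cos θ) ^ k = 2 ^ (k + 2) * (sin θ ^ 2 * cos θ ^ k) :=
    fun θ => by ring
  simp only [hconst, intervalIntegral.integral_const_mul, integral_sin_sq_mul_cos_pow]
  field_simp
  ring

lemma mSc_two_mul (k : ℕ) : mSc (2 * k) = catalan k := by
  rw [mSc_eq_integral_cos_pow, integral_cos_pow_two_mul]
  have hcat : ((k + 1 : ℕ) : ℝ) * catalan k = k.centralBinom := by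
    exact_mod_cast succ_mul_catalan_eq_centralBinom k
  rw [← hcat, pow_succ, pow_mul]
  push_cast
  field_simp
  ring

lemma mSc_two_mul_add_one (k : ℕ) : mSc (2 * k + 1) = 0 := by
  rw [mSc_eq_integral_cos_pow, integral_cos_pow_two_mul_add_one, mul_zero]

lemma mSc_eq_Dmat_zero (n : ℕ) : mSc n = Dmat n 0 := by
  rcases Nat.even_or_odd' n with ⟨k, rfl | rfl⟩
  · rw [mSc_two_mul, ← ballot_two_mul, ← zero_add (2 * k), Dmat_add_two_mul]
  · rw [mSc_two_mul_add_one, Dmat_eq_zero fun t => by omega]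

theorem semicircle_covariance_DDt_general (i j : ℕ) :
    mSc (i + j) - mSc i * mSc j = ∑' l : ℕ, Dmat i (l + 1) * Dmat j (l + 1) := by
  rw [tsum_Dmat_succ_mul_Dmat_succ, mSc_eq_Dmat_zero, mSc_eq_Dmat_zero, mSc_eq_Dmat_zero]

/-- **Covariance identity for the semicircle moments (Lemma 2.3 of [Nagel 2013], eq. (18)).**
For all `i, j ≥ 1`, `m_{i+j}(μ_sc) - m_i(μ_sc)·m_j(μ_sc) = Σ_{l≥1} D_{i,l}·D_{j,l}`,
i.e. the covariance matrix of the centered monomials under the semicircle law is `D·Dᵀ`. -/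
theorem semicircle_covariance_DDt (i j : ℕ) (hi : 1 ≤ i) (hj : 1 ≤ j) :
    mSc (i + j) - mSc i * mSc j = ∑' l : ℕ, Dmat i (l + 1) * Dmat j (l + 1) :=
  semicircle_covariance_DDt_general i j

end
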